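/- arXiv:2403.11154 — 2 statements merged into one kernel-verified Lean document; each statement's English description precedes it below -/
import Mathlib

section
/- Let F be a field of characteristic 2 and α, β ∈ F with β ≠ 0. The quaternion algebra [α,β)_{2,F}, generated by i, j with i² + i = α, j² = β, j i j^{-1} = i + 1, is split (isomorphic to the 2×2 matrix algebra over F) if and only if α is of the form x² + x for some x in the field F(√β) — equivalently, if and only if α lies in the image of the Artin–Schreier map composed with the norm condition, i.e., α = y² + y + β z² for some y, z ∈ F. -/
/-- The defining relations of the cyclic `p`-algebra `[α,β)_{p,F}`:
`i^p - i = α`, `j^p = β`, `j i = (i+1) j`, where `i` and `j` are the images of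
the free generators indexed by `false` and `true` respectively. -/
inductive CyclicRel (F : Type) [Field F] (p : ℕ) (α β : F) :
    FreeAlgebra F Bool → FreeAlgebra F Bool → Prop
  | i : CyclicRel F p α β (FreeAlgebra.ι F false ^ p - FreeAlgebra.ι F false)
      (algebraMap F (FreeAlgebra F Bool) α)
  | j : CyclicRel F p α β (FreeAlgebra.ι F true ^ p)
      (algebraMap F (FreeAlgebra F Bool) β)
  | comm : CyclicRel F p α β (FreeAlgebra.ι F true * FreeAlgebra.ι F false)
      ((FreeAlgebra.ι F false + 1) * FreeAlgebra.ι F true)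

/-- The cyclic algebra `[α,β)_{p,F}`, presented by generators and relations. -/
abbrev CyclicAlg (F : Type) [Field F] (p : ℕ) (α β : F) : Type :=
  RingQuot (CyclicRel F p α β)

/-!
For `X = y + i + z j` one has `X (X + 1) = y² + y + β z² - α`: in characteristic 2, `X + 1` is the
conjugate of `X`, and this is the reduced norm of `X`. Given a splitting, `j` is not scalar (as
`β ≠ 0`), so some vector `v` is not an eigenvector of `j` and `v, j v` is a basis; writing
`i v = y v + z j v` makes `X` singular, so its norm vanishes.
Conversely, if `α = y² + y + β z²`, then `i ↦ [[y, z], [βz, y + 1]]`, `j ↦ [[0, 1], [β, 0]]`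
respects the relations and sends `X` to the matrix unit `E₂₂`, which together with the image of `j`
generates `M₂(F)`. Since `1, i, j, ij` span the algebra, this surjection is bijective.
-/

theorem Submodule.eq_top_of_mul_mem_of_adjoin_eq_top {R A : Type*} [CommSemiring R] [Semiring A]
    [Algebra R A] {s : Set A} (hs : Algebra.adjoin R s = ⊤) {S : Submodule R A} (h1 : 1 ∈ S)
    (hmul : ∀ x ∈ S, ∀ y ∈ s, x * y ∈ S) : S = ⊤ := by
  rw [eq_top_iff, ← Algebra.top_toSubmodule (R := R), ← hs, Algebra.adjoin_eq_span,
    Submodule.span_le]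
  intro x hx
  induction hx using Submonoid.closure_induction_right with
  | one => exact h1
  | mul_right x _ y hy hx => exact hmul x hx y hy

theorem mul_add_one_eq_algebraMap_of_relations {F A : Type*} [CommRing F] [CharP F 2] [Ring A]
    [Algebra F A] {α β : F} {I J : A} (hI : I ^ 2 - I = algebraMap F A α)
    (hJ : J ^ 2 = algebraMap F A β) (hJI : J * I = (I + 1) * J) (y z : F) :
    (algebraMap F A y + I + z • J) * (algebraMap F A y + I + z • J + 1) =
      algebraMap F A (y ^ 2 + y + β * z ^ 2 - α) := by
  have h2 : (2 : F) = 0 := CharTwo.two_eq_zero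
  simp only [Algebra.algebraMap_eq_smul_one, sq] at hI hJ ⊢
  simp only [add_mul, mul_add, smul_mul_assoc, mul_smul_comm, one_mul, mul_one] at hJI ⊢
  linear_combination (norm := module) hI + z ^ 2 • hJ + z • hJI +
    h2 • ((y + 1) • I + (y * z + z) • J + α • 1 + z • (I * J))

open Matrix in
theorem exists_eq_sq_add_self_add_mul_sq_of_matrices {F : Type*} [Field F] [CharP F 2]
    {α β : F} (hβ : β ≠ 0) {I J : Matrix (Fin 2) (Fin 2) F}
    (hI : I ^ 2 - I = algebraMap F _ α) (hJ : J ^ 2 = algebraMap F _ β)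
    (hJI : J * I = (I + 1) * J) :
    ∃ y z : F, α = y ^ 2 + y + β * z ^ 2 := by
  obtain ⟨v, hv⟩ : ∃ v, LinearIndependent F ![v, J *ᵥ v] := by
    by_contra! h
    obtain ⟨c, hc⟩ := LinearMap.exists_eq_smul_id_of_forall_notLinearIndependent
      (f := toLin' J) (by simpa using h)
    have hJc : J = algebraMap F _ c := by
      rw [← toLin'.injective.eq_iff, hc, Algebra.algebraMap_eq_smul_one, map_smul, toLin'_one]
      rfl
    have hJ0 : J = 0 := by
      have := hJI
      rw [add_one_mul, hJc, ← Algebra.commutes, left_eq_add] at this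
      rwa [hJc]
    exact hβ (by simpa [hJ0] using hJ.symm)
  obtain ⟨c, hc⟩ := (Submodule.mem_span_range_iff_exists_fun F).mp
    ((hv.span_eq_top_of_card_eq_finrank' (by simp)).symm ▸ Submodule.mem_top : I *ᵥ v ∈ _)
  simp only [Fin.sum_univ_two, cons_val_zero, cons_val_one] at hc
  refine ⟨c 0, c 1, ?_⟩
  have hX : (algebraMap F _ (c 0) + I + c 1 • J) *ᵥ v = 0 := by
    simp only [add_mulVec, Algebra.algebraMap_eq_smul_one, smul_mulVec, one_mulVec, ← hc]
    linear_combination (norm := module)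
      (CharTwo.two_eq_zero : (2 : F) = 0) • (c 0 • v + c 1 • J *ᵥ v)
  have hdet := exists_mulVec_eq_zero_iff.mp ⟨v, hv.ne_zero 0, hX⟩
  have := congrArg det (mul_add_one_eq_algebraMap_of_relations hI hJ hJI (c 0) (c 1))
  rw [det_mul, hdet, zero_mul, Algebra.algebraMap_eq_smul_one, det_smul, det_one,
    Fintype.card_fin, mul_one, eq_comm, pow_eq_zero_iff two_ne_zero, sub_eq_zero] at this
  exact this.symm

namespace CyclicAlg

variable {F : Type} [Field F] {p : ℕ} {α β : F}

noncomputable def i : CyclicAlg F p α β :=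
  RingQuot.mkAlgHom F (CyclicRel F p α β) (FreeAlgebra.ι F false)

noncomputable def j : CyclicAlg F p α β :=
  RingQuot.mkAlgHom F (CyclicRel F p α β) (FreeAlgebra.ι F true)

theorem i_pow_sub_i : (i : CyclicAlg F p α β) ^ p - i = algebraMap F _ α := by
  simpa [i] using RingQuot.mkAlgHom_rel F (CyclicRel.i (p := p) (α := α) (β := β))

theorem j_pow : (j : CyclicAlg F p α β) ^ p = algebraMap F _ β := by
  simpa [j] using RingQuot.mkAlgHom_rel F (CyclicRel.j (p := p) (α := α) (β := β))

theorem j_mul_i : (j : CyclicAlg F p α β) * i = (i + 1) * j := by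
  simpa [i, j] using RingQuot.mkAlgHom_rel F (CyclicRel.comm (p := p) (α := α) (β := β))

section lift

variable {A : Type*} [Ring A] [Algebra F A] (a b : A) (ha : a ^ p - a = algebraMap F A α)
  (hb : b ^ p = algebraMap F A β) (hba : b * a = (a + 1) * b)

noncomputable def lift : CyclicAlg F p α β →ₐ[F] A :=
  RingQuot.liftAlgHom F ⟨FreeAlgebra.lift F (fun t => bif t then b else a), by
    rintro _ _ ⟨⟩ <;> simpa⟩

@[simp]
theorem lift_i : lift a b ha hb hba i = a := by
  simp [lift, i]

@[simp]
theorem lift_j : lift a b ha hb hba j = b := by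
  simp [lift, j]

end lift

theorem adjoin_i_j : Algebra.adjoin F {i, j} = (⊤ : Subalgebra F (CyclicAlg F p α β)) := by
  have : ({i, j} : Set (CyclicAlg F p α β)) =
      RingQuot.mkAlgHom F (CyclicRel F p α β) '' Set.range (FreeAlgebra.ι F) := by
    ext x
    simp [i, j, eq_comm]
  rw [this, Algebra.adjoin_image, FreeAlgebra.adjoin_range_ι, Algebra.map_top,
    AlgHom.range_eq_top]
  exact RingQuot.mkAlgHom_surjective F _

theorem span_eq_top :
    Submodule.span F (Set.range ![1, i, j, i * j]) = (⊤ : Submodule F (CyclicAlg F 2 α β)) := by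
  refine Submodule.eq_top_of_mul_mem_of_adjoin_eq_top adjoin_i_j
    (Submodule.subset_span ⟨0, rfl⟩) fun x hx y hy => ?_
  have hii : (i : CyclicAlg F 2 α β) * i = algebraMap F _ α + i := by
    rw [← sq, ← i_pow_sub_i, sub_add_cancel]
  have hjj : (j : CyclicAlg F 2 α β) * j = algebraMap F _ β := by rw [← sq, j_pow]
  have hji : (j : CyclicAlg F 2 α β) * i = i * j + j := by rw [j_mul_i, add_one_mul]
  have hiji : (i : CyclicAlg F 2 α β) * j * i = algebraMap F _ α * j + 2 * (i * j) := by
    rw [mul_assoc, hji, mul_add, ← mul_assoc, hii, add_mul, two_mul, add_assoc]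
  let S := Submodule.span F (Set.range ![(1 : CyclicAlg F 2 α β), i, j, i * j])
  suffices ∀ b ∈ Set.range ![(1 : CyclicAlg F 2 α β), i, j, i * j], b * y ∈ S from
    (Submodule.map_span_le (LinearMap.mulRight F y) _ S).mpr this ⟨x, hx, rfl⟩
  rintro _ ⟨k, rfl⟩
  rw [Submodule.mem_span_range_iff_exists_fun]
  rcases hy with rfl | rfl <;> fin_cases k
  · exact ⟨![0, 1, 0, 0], by simp [Fin.sum_univ_four]⟩
  · exact ⟨![α, 1, 0, 0], by simp [Fin.sum_univ_four, hii, Algebra.algebraMap_eq_smul_one]⟩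
  · exact ⟨![0, 0, 1, 1], by simp [Fin.sum_univ_four, hji, add_comm]⟩
  · exact ⟨![0, 0, α, 2], by simp [Fin.sum_univ_four, hiji, Algebra.smul_def, map_ofNat]⟩
  · exact ⟨![0, 0, 1, 0], by simp [Fin.sum_univ_four]⟩
  · exact ⟨![0, 0, 0, 1], by simp [Fin.sum_univ_four]⟩
  · exact ⟨![β, 0, 0, 0], by simp [Fin.sum_univ_four, hjj, Algebra.algebraMap_eq_smul_one]⟩
  · exact ⟨![0, β, 0, 0],
      by simp [Fin.sum_univ_four, mul_assoc, hjj, Algebra.algebraMap_eq_smul_one]⟩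

instance : FiniteDimensional F (CyclicAlg F 2 α β) := by
  refine ⟨?_⟩
  rw [← span_eq_top]
  exact Submodule.fg_span (Set.finite_range _)

theorem finrank_le_four : Module.finrank F (CyclicAlg F 2 α β) ≤ 4 := by
  have := finrank_range_le_card (R := F) ![(1 : CyclicAlg F 2 α β), i, j, i * j]
  rwa [Set.finrank, span_eq_top, finrank_top, Fintype.card_fin] at this

section toMatrix

variable [CharP F 2] {y z : F}

open Matrix

noncomputable def toMatrix (h : α = y ^ 2 + y + β * z ^ 2) :
    CyclicAlg F 2 α β →ₐ[F] Matrix (Fin 2) (Fin 2) F :=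
  lift !![y, z; β * z, y + 1] !![0, 1; β, 0]
    (by
      ext a b
      fin_cases a <;> fin_cases b <;> simp [sq, algebraMap_matrix_apply, h] <;> grind)
    (by ext a b; fin_cases a <;> fin_cases b <;> simp [sq, algebraMap_matrix_apply])
    (by
      ext a b
      fin_cases a <;> fin_cases b <;> simp [mul_apply, one_apply] <;> grind)

theorem toMatrix_surjective (hβ : β ≠ 0) (h : α = y ^ 2 + y + β * z ^ 2) :
    Function.Surjective (toMatrix h) := by
  have hj : toMatrix h j = !![0, 1; β, 0] := lift_j ..
  set x : CyclicAlg F 2 α β := algebraMap F _ y + i + z • j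
  have hx : toMatrix h x = !![0, 0; 0, 1] := by
    simp only [x, map_add, map_smul, AlgHom.commutes, toMatrix, lift_i, lift_j]
    ext a b
    fin_cases a <;> fin_cases b <;> simp [algebraMap_matrix_apply] <;> grind
  intro M
  refine ⟨M 0 0 • (1 - x) + M 1 1 • x + M 0 1 • ((1 - x) * j) + (M 1 0 / β) • (x * j), ?_⟩
  simp only [map_add, map_smul, map_sub, map_mul, map_one, hx, hj]
  ext a b
  fin_cases a <;> fin_cases b <;> simp [mul_apply, one_apply, hβ]

theorem toMatrix_bijective (hβ : β ≠ 0) (h : α = y ^ 2 + y + β * z ^ 2) :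
    Function.Bijective (toMatrix h) := by
  have hsurj : Function.Surjective (toMatrix h).toLinearMap := toMatrix_surjective hβ h
  have hrank : Module.finrank F (CyclicAlg F 2 α β) =
      Module.finrank F (Matrix (Fin 2) (Fin 2) F) := by
    have := LinearMap.finrank_le_finrank_of_surjective hsurj
    simp only [Module.finrank_matrix, Module.finrank_self, Fintype.card_fin] at this ⊢
    linarith [finrank_le_four (F := F) (α := α) (β := β)]
  exact ⟨(LinearMap.injective_iff_surjective_of_finrank_eq_finrank hrank).mpr hsurj, hsurj⟩

end toMatrix

end CyclicAlg

theorem quaternion_char_two_split_iff (F : Type) [Field F] [CharP F 2]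
    (α β : F) (hβ : β ≠ 0) :
    Nonempty (CyclicAlg F 2 α β ≃ₐ[F] Matrix (Fin 2) (Fin 2) F) ↔
      ∃ y z : F, α = y ^ 2 + y + β * z ^ 2 := by
  constructor
  · rintro ⟨e⟩
    refine exists_eq_sq_add_self_add_mul_sq_of_matrices hβ (I := e CyclicAlg.i)
      (J := e CyclicAlg.j) ?_ ?_ ?_
    · rw [← map_pow, ← map_sub, CyclicAlg.i_pow_sub_i, AlgEquiv.commutes]
    · rw [← map_pow, CyclicAlg.j_pow, AlgEquiv.commutes]
    · rw [← map_one e, ← map_add, ← map_mul, ← map_mul, CyclicAlg.j_mul_i]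
  · rintro ⟨y, z, h⟩
    exact ⟨AlgEquiv.ofBijective _ (CyclicAlg.toMatrix_bijective hβ h)⟩
end

section
/- Let F be a field of characteristic p > 0, α ∈ F with X^p - X - α irreducible over F, and consider the rational function field K = F(x) with the x-adic valuation. Then every norm from K[℘^{-1}(α)]/K has x-adic valuation divisible by p, while v(x) = 1; consequently x is not a norm from K[℘^{-1}(α)]/K. -/
/-!
Every `f ≠ 0` in `E` is `c • g(i)` with `c ∈ K` and `g ∈ F[x][Y]` primitive (Gauss's lemma), so that
the reduction `g₀ ∈ F[Y]` of `g` at `x = 0` is nonzero, of degree `< p`. The norm of `g(i)` is the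
image of the norm of `g` in `F[x][Y]/(Y^p - Y - α)`, a polynomial in `x` whose constant term is the
norm of `g₀` in the field `F[Y]/(Y^p - Y - α)`, hence nonzero. So `N(g(i))` is an `x`-adic unit and
`v (N f) = p • v c`.
-/

open Polynomial Module
open scoped nonZeroDivisors

section NormSpecialization

variable {ι R S A B : Type*} [Fintype ι] [CommRing R] [CommRing S] [CommRing A] [CommRing B]
  [Algebra R A] [Algebra S B] {φ : R →+* S} {ψ : A →+* B}

theorem Module.Basis.repr_map_of_map_basis
    (hψ : ψ.comp (algebraMap R A) = (algebraMap S B).comp φ)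
    (bA : Basis ι R A) (bB : Basis ι S B) (hb : ∀ k, ψ (bA k) = bB k) (x : A) (k : ι) :
    bB.repr (ψ x) k = φ (bA.repr x k) := by
  have hsmul : ∀ (r : R) (a : A), ψ (r • a) = φ r • ψ a := fun r a => by
    rw [Algebra.smul_def, map_mul, ← RingHom.comp_apply, hψ, RingHom.comp_apply,
      ← Algebra.smul_def]
  conv_lhs => rw [← bA.sum_repr x]
  rw [map_sum]
  simp only [hsmul, hb, bB.repr_sum_self]

theorem Algebra.map_norm_of_map_basis [DecidableEq ι]
    (hψ : ψ.comp (algebraMap R A) = (algebraMap S B).comp φ)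
    (bA : Basis ι R A) (bB : Basis ι S B) (hb : ∀ k, ψ (bA k) = bB k) (a : A) :
    φ (Algebra.norm R a) = Algebra.norm S (ψ a) := by
  rw [Algebra.norm_eq_matrix_det bA, Algebra.norm_eq_matrix_det bB, RingHom.map_det]
  congr 1
  ext k j
  simp [Algebra.leftMulMatrix_eq_repr_mul, ← hb, ← map_mul,
    Basis.repr_map_of_map_basis hψ bA bB hb]

theorem PowerBasis.map_norm_of_map_gen (hψ : ψ.comp (algebraMap R A) = (algebraMap S B).comp φ)
    (pbA : PowerBasis R A) (pbB : PowerBasis S B) (hdim : pbA.dim = pbB.dim)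
    (hgen : ψ pbA.gen = pbB.gen) (a : A) :
    φ (Algebra.norm R a) = Algebra.norm S (ψ a) :=
  Algebra.map_norm_of_map_basis hψ (pbA.basis.reindex (finCongr hdim)) pbB.basis
    (fun k => by simp [hgen]) a

theorem AdjoinRoot.map_norm_mk {g : R[X]} (hg : g.Monic) (pb : PowerBasis S B)
    (hdim : g.natDegree = pb.dim) (hroot : aeval pb.gen (g.map φ) = 0) (Q : R[X]) :
    φ (Algebra.norm R (mk g Q)) = Algebra.norm S (aeval pb.gen (Q.map φ)) := by
  have hroot' : g.eval₂ ((algebraMap S B).comp φ) pb.gen = 0 := by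
    rwa [← eval₂_map, ← aeval_def]
  rw [PowerBasis.map_norm_of_map_gen (RingHom.ext fun _ => lift_of hroot') (powerBasis' hg) pb
    hdim (lift_root hroot'), lift_mk, aeval_def, eval₂_map]

end NormSpecialization

section RatFuncValuation

variable {F Γ : Type*} [Field F] [LinearOrderedAddCommMonoidWithTop Γ]
  {v : AddValuation (RatFunc F) Γ}

theorem RatFunc.valuation_algebraMap_polynomial_nonneg (hX : 0 ≤ v RatFunc.X)
    (hC : ∀ c : F, 0 ≤ v (algebraMap F (RatFunc F) c)) (q : F[X]) :
    0 ≤ v (algebraMap F[X] (RatFunc F) q) := by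
  rw [q.as_sum_range_C_mul_X_pow, map_sum]
  refine v.map_le_sum fun k _ => ?_
  rw [map_mul, map_pow, v.map_mul, v.map_pow, RatFunc.algebraMap_C, RatFunc.algebraMap_X]
  exact add_nonneg (hC _) (nsmul_nonneg hX k)

theorem RatFunc.valuation_algebraMap_polynomial_eq_zero (hX : 0 < v RatFunc.X)
    (hC : ∀ c : F, c ≠ 0 → v (algebraMap F (RatFunc F) c) = 0) {q : F[X]} (hq : q.coeff 0 ≠ 0) :
    v (algebraMap F[X] (RatFunc F) q) = 0 := by
  have hC' : ∀ c : F, 0 ≤ v (algebraMap F (RatFunc F) c) := fun c => by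
    rcases eq_or_ne c 0 with rfl | hc
    · simp
    · exact (hC c hc).ge
  have hXq : 0 < v (algebraMap F[X] (RatFunc F) (Polynomial.X * q.divX)) := by
    rw [map_mul, v.map_mul, RatFunc.algebraMap_X]
    exact add_pos_of_pos_of_nonneg hX (valuation_algebraMap_polynomial_nonneg hX.le hC' _)
  have hconst : v (algebraMap F[X] (RatFunc F) (Polynomial.C (q.coeff 0))) = 0 := by
    rw [RatFunc.algebraMap_C, ← RatFunc.algebraMap_eq_C, hC _ hq]
  rw [← q.X_mul_divX_add, map_add, v.map_add_eq_of_lt_right (hconst ▸ hXq), hconst]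

end RatFuncValuation

theorem Polynomial.map_C_map_constantCoeff {R : Type*} [CommSemiring R] (P : R[X]) :
    (P.map C).map constantCoeff = P := by
  rw [Polynomial.map_map]
  convert P.map_id
  ext
  simp

theorem Polynomial.Monic.irreducible_map_ratFunc {F : Type*} [Field F] {P : F[X]} (hP : P.Monic)
    (hirr : Irreducible P) : Irreducible (P.map (algebraMap F (RatFunc F))) := by
  have hPC : (P.map C).Monic := hP.map C
  have hFX : Irreducible (P.map C) :=
    hPC.irreducible_of_irreducible_map constantCoeff _ (by rwa [P.map_C_map_constantCoeff])
  rw [IsScalarTower.algebraMap_eq F F[X] (RatFunc F), ← Polynomial.map_map]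
  exact (hPC.irreducible_iff_irreducible_map_fraction_map).1 hFX

theorem Polynomial.exists_isPrimitive_eq_smul_map {R K : Type*} [CommRing R] [IsDomain R]
    [NormalizedGCDMonoid R] [Field K] [Algebra R K] [IsFractionRing R K] (Q : K[X]) :
    ∃ (c : K) (P : R[X]), P.IsPrimitive ∧ Q = c • P.map (algebraMap R K) := by
  obtain ⟨b, hb, hbQ⟩ := IsLocalization.integerNormalization_spec R⁰ Q
  set P := IsLocalization.integerNormalization R⁰ Q
  have hb0 : algebraMap R K b ≠ 0 :=
    IsFractionRing.to_map_ne_zero_of_mem_nonZeroDivisors hb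
  refine ⟨algebraMap R K P.content / algebraMap R K b, P.primPart, P.isPrimitive_primPart, ?_⟩
  rw [← inv_smul_smul₀ hb0 Q, algebraMap_smul, ← hbQ]
  conv_lhs => rw [P.eq_C_content_mul_primPart]
  rw [Polynomial.map_mul, map_C, ← smul_eq_C_mul, smul_smul, div_eq_inv_mul]

theorem Polynomial.IsPrimitive.map_constantCoeff_ne_zero {R : Type*} [CommRing R] [Nontrivial R]
    {Q : R[X][X]} (hQ : Q.IsPrimitive) : Q.map constantCoeff ≠ 0 := by
  intro h
  refine not_isUnit_X (hQ X (C_dvd_iff_dvd_coeff _ _ |>.2 fun n => ?_))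
  exact X_dvd_iff.2 <| by simpa using congrArg (coeff · n) h

theorem RatFunc.exists_norm_eq_pow_mul_algebraMap {F E : Type*} [Field F] [Field E]
    [Algebra (RatFunc F) E] {P : F[X]} (hP : P.Monic) (hirr : Irreducible P) {i : E}
    (hi : aeval i (P.map (algebraMap F (RatFunc F))) = 0)
    (hgen : Algebra.adjoin (RatFunc F) {i} = ⊤) {f : E} (hf : f ≠ 0) :
    ∃ c : RatFunc F, c ≠ 0 ∧ ∃ q : F[X], q.coeff 0 ≠ 0 ∧
      Algebra.norm (RatFunc F) f = c ^ P.natDegree * algebraMap F[X] (RatFunc F) q := by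
  classical
  have : Fact (Irreducible P) := ⟨hirr⟩
  have hPK : P.map (algebraMap F (RatFunc F)) = minpoly (RatFunc F) i :=
    minpoly.eq_of_irreducible_of_monic (hP.irreducible_map_ratFunc hirr) hi (hP.map _)
  let pbE := PowerBasis.ofAdjoinEqTop ⟨_, hP.map _, hi⟩ hgen
  let pbB := AdjoinRoot.powerBasis' hP
  have hdegC : (P.map Polynomial.C).natDegree = P.natDegree := hP.natDegree_map Polynomial.C
  have hgenE : pbE.gen = i := PowerBasis.ofAdjoinEqTop_gen _ _
  have hdimE : pbE.dim = P.natDegree :=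
    (PowerBasis.ofAdjoinEqTop_dim _ _).trans (by rw [← hPK, hP.natDegree_map])
  have hmapK : (P.map Polynomial.C).map (algebraMap F[X] (RatFunc F)) =
      P.map (algebraMap F (RatFunc F)) := by
    rw [Polynomial.map_map, ← Polynomial.algebraMap_eq, ← IsScalarTower.algebraMap_eq]
  -- `F[x][Y]/(P)` specializes to `E` along `F[x] → K` and to `F[Y]/(P)` along `x ↦ 0`.
  have hnormE := AdjoinRoot.map_norm_mk (hP.map Polynomial.C) pbE (hdegC.trans hdimE.symm)
    (by rw [hgenE, hmapK]; exact hi)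
  have hnormB := AdjoinRoot.map_norm_mk (φ := constantCoeff) (hP.map Polynomial.C) pbB hdegC (by
    rw [P.map_C_map_constantCoeff, AdjoinRoot.powerBasis'_gen, AdjoinRoot.aeval_eq,
      AdjoinRoot.mk_self])
  obtain ⟨QK, hQK, rfl⟩ := pbE.exists_eq_aeval f
  obtain ⟨c, Q, hQ, rfl⟩ := exists_isPrimitive_eq_smul_map (R := F[X]) QK
  have hc : c ≠ 0 := by rintro rfl; simp at hf
  refine ⟨c, hc, Algebra.norm F[X] (AdjoinRoot.mk (P.map Polynomial.C) Q), ?_, ?_⟩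
  · have hdeg : (Q.map constantCoeff).natDegree < P.natDegree := calc
      _ ≤ Q.natDegree := natDegree_map_le
      _ = (c • Q.map (algebraMap F[X] (RatFunc F))).natDegree := by
        rw [natDegree_smul _ hc, natDegree_map_eq_of_injective (IsFractionRing.injective _ _)]
      _ < P.natDegree := hdimE ▸ hQK
    rw [← constantCoeff_apply, hnormB, AdjoinRoot.powerBasis'_gen, AdjoinRoot.aeval_eq,
      Algebra.norm_ne_zero_iff_of_basis pbB.basis, Ne, AdjoinRoot.mk_eq_zero]
    exact fun hdvd => hdeg.not_ge (natDegree_le_of_dvd hdvd hQ.map_constantCoeff_ne_zero)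
  · rw [map_smul, Algebra.smul_def, map_mul, Algebra.norm_algebraMap, pbE.finrank, hdimE,
      hnormE]

theorem RatFunc.exists_valuation_norm_eq_nsmul {F E Γ : Type*} [Field F] [Field E]
    [LinearOrderedAddCommMonoidWithTop Γ] [Algebra (RatFunc F) E] {P : F[X]} (hP : P.Monic)
    (hirr : Irreducible P) {v : AddValuation (RatFunc F) Γ} (hvX : 0 < v RatFunc.X)
    (hvF : ∀ c : F, c ≠ 0 → v (algebraMap F (RatFunc F) c) = 0) {i : E}
    (hi : aeval i (P.map (algebraMap F (RatFunc F))) = 0)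
    (hgen : Algebra.adjoin (RatFunc F) {i} = ⊤) {f : E} (hf : f ≠ 0) :
    ∃ c : RatFunc F, c ≠ 0 ∧ v (Algebra.norm (RatFunc F) f) = P.natDegree • v c := by
  obtain ⟨c, hc, q, hq, hN⟩ := exists_norm_eq_pow_mul_algebraMap hP hirr hi hgen hf
  refine ⟨c, hc, ?_⟩
  rw [hN, v.map_mul, v.map_pow, valuation_algebraMap_polynomial_eq_zero hvX hvF hq, add_zero]

theorem Polynomial.monic_X_pow_sub_X_sub_C {R : Type*} [CommRing R] [Nontrivial R] {p : ℕ}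
    (hp : 1 < p) (a : R) : (X ^ p - X - C a : R[X]).Monic := by
  rw [sub_sub]
  exact monic_X_pow_sub (by compute_degree!)

theorem Polynomial.natDegree_X_pow_sub_X_sub_C {R : Type*} [CommRing R] [Nontrivial R] {p : ℕ}
    (hp : 1 < p) (a : R) : (X ^ p - X - C a : R[X]).natDegree = p := by
  rw [natDegree_sub_C, natDegree_sub_eq_left_of_natDegree_lt] <;> simp [hp]

theorem norms_have_valuation_divisible_by_p_general (F : Type) [Field F] (p : ℕ)
    [Fact p.Prime] (α : F)
    (hirr : Irreducible (X ^ p - X - C α : F[X]))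
    (v : AddValuation (RatFunc F) (WithTop ℤ))
    (hvX : v RatFunc.X = (1 : ℤ))
    (hvF : ∀ c : F, c ≠ 0 → v (algebraMap F (RatFunc F) c) = (0 : ℤ))
    (E : Type) [Field E] [Algebra (RatFunc F) E] (i : E)
    (hi : i ^ p - i = algebraMap (RatFunc F) E (algebraMap F (RatFunc F) α))
    (hgen : Algebra.adjoin (RatFunc F) {i} = ⊤) :
    (∀ f : E, f ≠ 0 → ∃ n : ℤ, v (Algebra.norm (RatFunc F) f) = ((p * n : ℤ) : WithTop ℤ)) ∧
    ¬ ∃ f : E, Algebra.norm (RatFunc F) f = RatFunc.X := by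
  have hp : 1 < p := (Fact.out : p.Prime).one_lt
  have hmonic := monic_X_pow_sub_X_sub_C hp α
  have hroot : aeval i ((X ^ p - X - C α : F[X]).map (algebraMap F (RatFunc F))) = 0 := by
    simp [hi]
  have hvX' : 0 < v RatFunc.X := by
    rw [hvX]
    exact_mod_cast one_pos
  have hdvd : ∀ f : E, f ≠ 0 →
      ∃ n : ℤ, v (Algebra.norm (RatFunc F) f) = ((p * n : ℤ) : WithTop ℤ) := by
    intro f hf
    obtain ⟨c, hc, hvN⟩ :=
      RatFunc.exists_valuation_norm_eq_nsmul hmonic hirr hvX' hvF hroot hgen hf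
    obtain ⟨n, hn⟩ := WithTop.ne_top_iff_exists.mp (v.ne_top_iff.mpr hc)
    refine ⟨n, ?_⟩
    rw [hvN, natDegree_X_pow_sub_X_sub_C hp, ← hn, ← WithTop.coe_nsmul, nsmul_eq_mul]
  refine ⟨hdvd, fun ⟨f, hf⟩ => ?_⟩
  have : Module.Finite (RatFunc F) E :=
    (PowerBasis.ofAdjoinEqTop ⟨_, hmonic.map _, hroot⟩ hgen).finite
  obtain ⟨n, hn⟩ := hdvd f (by rintro rfl; exact RatFunc.X_ne_zero (hf ▸ Algebra.norm_zero))
  rw [hf, hvX] at hn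
  have hp1 : (p : ℤ) ∣ 1 := ⟨n, by exact_mod_cast hn⟩
  exact (Fact.out : p.Prime).not_dvd_one (by exact_mod_cast hp1)

theorem norms_have_valuation_divisible_by_p (F : Type) [Field F] (p : ℕ)
    [Fact p.Prime] [CharP F p] (α : F)
    (hirr : Irreducible (X ^ p - X - C α : F[X]))
    (v : AddValuation (RatFunc F) (WithTop ℤ))
    (hvX : v RatFunc.X = (1 : ℤ))
    (hvF : ∀ c : F, c ≠ 0 → v (algebraMap F (RatFunc F) c) = (0 : ℤ))
    (E : Type) [Field E] [Algebra (RatFunc F) E] (i : E)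
    (hi : i ^ p - i = algebraMap (RatFunc F) E (algebraMap F (RatFunc F) α))
    (hgen : Algebra.adjoin (RatFunc F) {i} = ⊤) :
    (∀ f : E, f ≠ 0 → ∃ n : ℤ, v (Algebra.norm (RatFunc F) f) = ((p * n : ℤ) : WithTop ℤ)) ∧
    ¬ ∃ f : E, Algebra.norm (RatFunc F) f = RatFunc.X :=
  norms_have_valuation_divisible_by_p_general F p α hirr v hvX hvF E i hi hgen
end
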